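/- arXiv:quant-ph/0602057 — 3 statements merged into one kernel-verified Lean document; each statement's English description precedes it below -/
import Mathlib

section
/- Entropy computation for the extended classical–quantum state: for every attack E, the purification vectors φ_i are unit vectors, and the state Θ̃ := ∑_{i ∈ I} 2^{-N} |e_i⟩⟨e_i| ⊗ |φ_i⟩⟨φ_i| satisfies S(Θ̃|_R) = N and S(Θ̃) = N, where Θ̃|_R is the partial trace onto the first factor ℂ^{2^N}. Consequently the quantum mutual entropy S(Θ̃|_R) + S(Θ̃|_{E'P}) − S(Θ̃) equals S(2^{-N} ∑_{i ∈ I} |φ_i⟩⟨φ_i|). -/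
open scoped ComplexInnerProductSpace ComplexOrder
open Finset

namespace IDT

/-- N-bit strings. -/
abbrev Bits (N : ℕ) := Fin N → ZMod 2

/-- Bitwise dot product `i·k := ∑ n i_n k_n` (lifting bits to naturals). -/
def bdot {N : ℕ} (i k : Bits N) : ℕ := ∑ n, (i n).val * (k n).val

/-- Eve's attack: unitarity condition on the family of vectors. -/
def Attack {N M : ℕ} (E : Bits N → Bits N → EuclideanSpace ℂ (Fin M)) : Prop :=
  ∀ i k : Bits N, (∑ j : Bits N, ⟪E i j, E k j⟫) = if i = k then 1 else 0

/-- Conjugate-basis vectors `Ē l s := 2^{-N} ∑_{i,j} (-1)^{s·j + i·l} E i j`. -/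
noncomputable def Ebar {N M : ℕ} (E : Bits N → Bits N → EuclideanSpace ℂ (Fin M))
    (l s : Bits N) : EuclideanSpace ℂ (Fin M) :=
  (2 ^ N : ℂ)⁻¹ • ∑ i : Bits N, ∑ j : Bits N, ((-1 : ℂ) ^ (bdot s j + bdot i l)) • E i j

/-- Error distribution of Bob's conjugate-basis outcome. -/
noncomputable def pbar {N M : ℕ} (E : Bits N → Bits N → EuclideanSpace ℂ (Fin M))
    (c : Bits N) : ℝ :=
  (2 ^ N : ℝ)⁻¹ * ∑ i : Bits N, ‖Ebar E i (i + c)‖ ^ 2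

/-- `-x log₂ x` (with the convention `0 log₂ 0 = 0`). -/
noncomputable def ent2 (x : ℝ) : ℝ := -(x * Real.logb 2 x)

/-- A POVM on `ℂ^M` with finite outcome set `A`. -/
structure POVM (A : Type*) [Fintype A] (M : ℕ) where
  X : A → Matrix (Fin M) (Fin M) ℂ
  posSemidef : ∀ a : A, (X a).PosSemidef
  sum_one : ∑ a : A, X a = 1

/-- Eve's outcome probability `p(α|i)`. -/
noncomputable def pOut {N M : ℕ} {A : Type*} [Fintype A]
    (E : Bits N → Bits N → EuclideanSpace ℂ (Fin M)) (P : POVM A M) (a : A) (i : Bits N) : ℝ :=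
  (∑ j : Bits N, ⟪E i j, Matrix.toEuclideanLin (P.X a) (E i j)⟫).re

/-- (base-2) Shannon mutual information of a joint distribution. -/
noncomputable def mutualInfo {S T : Type*} [Fintype S] [Fintype T] (p : S → T → ℝ) : ℝ :=
  (∑ s, ent2 (∑ t, p s t)) + (∑ t, ent2 (∑ s, p s t)) - ∑ s, ∑ t, ent2 (p s t)

/-- Eve's information gain `I(A:E[X]|b)`. -/
noncomputable def infoGain {N M : ℕ} {A : Type*} [Fintype A]
    (E : Bits N → Bits N → EuclideanSpace ℂ (Fin M)) (P : POVM A M) : ℝ :=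
  mutualInfo (fun (i : Bits N) (a : A) => (2 ^ N : ℝ)⁻¹ * pOut E P a i)

/-- Elementary tensor of two Euclidean-space vectors. -/
noncomputable def tens {α β : Type*} (u : EuclideanSpace ℂ α) (v : EuclideanSpace ℂ β) :
    EuclideanSpace ℂ (α × β) :=
  (WithLp.equiv 2 ((α × β) → ℂ)).symm (fun p => u p.1 * v p.2)

/-- Symmetrized attack vectors. -/
noncomputable def Es {N M : ℕ} (E : Bits N → Bits N → EuclideanSpace ℂ (Fin M))
    (i j : Bits N) : EuclideanSpace ℂ (Bits N × Fin M) :=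
  (((Real.sqrt (2 ^ N))⁻¹ : ℝ) : ℂ) •
    ∑ m : Bits N, ((-1 : ℂ) ^ bdot m (i + j)) • tens (EuclideanSpace.single m 1) (E (i + m) (j + m))

/-- The operator `|e_m⟩⟨e_m| ⊗ X` as a matrix on `ℂ^{2^N} ⊗ ℂ^M`. -/
def projTens {N M : ℕ} (m : Bits N) (X : Matrix (Fin M) (Fin M) ℂ) :
    Matrix (Bits N × Fin M) (Bits N × Fin M) ℂ :=
  Matrix.of fun p q => (if p.1 = m ∧ q.1 = m then 1 else 0) * X p.2 q.2

/-- Purification vectors `φ_i`. -/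
noncomputable def phi {N M : ℕ} (E : Bits N → Bits N → EuclideanSpace ℂ (Fin M))
    (i : Bits N) : EuclideanSpace ℂ ((Bits N × Fin M) × Bits N) :=
  ∑ j : Bits N, tens (Es E i j) (EuclideanSpace.single (i + j) 1)

/-- Rank-one projection `|ψ⟩⟨ψ|` as a matrix. -/
noncomputable def outer {α : Type*} (ψ : EuclideanSpace ℂ α) : Matrix α α ℂ :=
  Matrix.of fun x y => ψ x * star (ψ y)

/-- Partial trace over the second tensor factor. -/
noncomputable def ptraceSnd {α β : Type*} [Fintype β] (Θ : Matrix (α × β) (α × β) ℂ) : Matrix α α ℂ :=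
  Matrix.of fun i j => ∑ b : β, Θ (i, b) (j, b)

/-- Partial trace over the first tensor factor. -/
noncomputable def ptraceFst {α β : Type*} [Fintype α] (Θ : Matrix (α × β) (α × β) ℂ) : Matrix β β ℂ :=
  Matrix.of fun x y => ∑ a : α, Θ (a, x) (a, y)

-- von Neumann entropy (base 2) of a Hermitian matrix (junk value `0` otherwise).
open Classical in
noncomputable def vN {n : Type*} [Fintype n] [DecidableEq n] (ρ : Matrix n n ℂ) : ℝ :=
  if h : ρ.IsHermitian then ∑ i, ent2 (h.eigenvalues i) else 0

/-- Classical–quantum state `∑ i p_i |e_i⟩⟨e_i| ⊗ ρ_i`. -/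
def cqState {F G : Type*} [DecidableEq F] (p : F → ℝ) (ρ : F → Matrix G G ℂ) :
    Matrix (F × G) (F × G) ℂ :=
  Matrix.of fun x y => if x.1 = y.1 then (p x.1 : ℂ) * ρ x.1 x.2 y.2 else 0

/-! Each coordinate of `φ_i` is, up to a sign and the factor `2^{-N/2}`, a coordinate of some
`E (i ⊕ m) (i ⊕ k ⊕ m)`, and unitarity of `E` makes every row sum `∑_j ‖E a j‖²` equal to `1`;
hence `‖φ_i‖ = 1`. Then `Θ̃` (whose blocks `|φ_i⟩⟨φ_i|` sit on orthogonal flags `e_i`) and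
`Θ̃|_R = 2^{-N} • 1` are both `2^{-N}` times a projection of trace `2^N`: their eigenvalues lie in
`{0, 2^{-N}}` and sum to `1`, so both have entropy `N`. -/

lemma bits_add_cancel_left {N : ℕ} (a b : Bits N) : a + (a + b) = b :=
  funext fun n => CharTwo.add_cancel_left (a n) (b n)

lemma Es_apply {N M : ℕ} (E : Bits N → Bits N → EuclideanSpace ℂ (Fin M))
    (i j m : Bits N) (f : Fin M) :
    Es E i j (m, f)
      = (((Real.sqrt (2 ^ N))⁻¹ : ℝ) : ℂ) * (-1) ^ bdot m (i + j) * E (i + m) (j + m) f := by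
  simp [Es, tens, WithLp.ofLp_sum, Finset.sum_apply, PiLp.single_apply, mul_assoc]

lemma phi_apply {N M : ℕ} (E : Bits N → Bits N → EuclideanSpace ℂ (Fin M))
    (i m k : Bits N) (f : Fin M) :
    phi E i ((m, f), k)
      = (((Real.sqrt (2 ^ N))⁻¹ : ℝ) : ℂ) * (-1) ^ bdot m k * E (i + m) (i + k + m) f := by
  have hk : ∀ j, k = i + j ↔ j = i + k := fun j => by
    constructor <;> rintro rfl <;> simp [bits_add_cancel_left]
  simp [phi, Es_apply, tens, WithLp.ofLp_sum, Finset.sum_apply, PiLp.single_apply, hk,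
    bits_add_cancel_left]

lemma Attack.sum_norm_sq {N M : ℕ} {E : Bits N → Bits N → EuclideanSpace ℂ (Fin M)}
    (hE : Attack E) (i : Bits N) : ∑ j, ‖E i j‖ ^ 2 = 1 := by
  have h := congrArg RCLike.re (hE i i)
  rw [map_sum, if_pos rfl, RCLike.one_re] at h
  simpa only [inner_self_eq_norm_sq] using h

lemma norm_sq_phi_apply {N M : ℕ} (E : Bits N → Bits N → EuclideanSpace ℂ (Fin M))
    (i m k : Bits N) (f : Fin M) :
    ‖phi E i ((m, f), k)‖ ^ 2 = (2 ^ N : ℝ)⁻¹ * ‖E (i + m) (i + k + m) f‖ ^ 2 := by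
  rw [phi_apply, norm_mul, norm_mul, norm_pow, norm_neg, norm_one, one_pow, mul_one, mul_pow,
    Complex.norm_real, norm_inv, Real.norm_of_nonneg (by positivity), inv_pow,
    Real.sq_sqrt (by positivity)]

lemma norm_phi {N M : ℕ} {E : Bits N → Bits N → EuclideanSpace ℂ (Fin M)} (hE : Attack E)
    (i : Bits N) : ‖phi E i‖ = 1 := by
  have hrow : ∀ m : Bits N, ∑ k, ‖E (i + m) (i + k + m)‖ ^ 2 = 1 := fun m => by
    simp only [add_right_comm i _ m]
    exact (Equiv.sum_comp (Equiv.addLeft (i + m)) fun j => ‖E (i + m) j‖ ^ 2).trans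
      (hE.sum_norm_sq _)
  have hsq : ‖phi E i‖ ^ 2 = 1 := calc
    ‖phi E i‖ ^ 2 = ∑ m : Bits N, (2 ^ N : ℝ)⁻¹ * ∑ k, ‖E (i + m) (i + k + m)‖ ^ 2 := by
      simp only [EuclideanSpace.norm_sq_eq, Fintype.sum_prod_type, norm_sq_phi_apply, ← mul_sum]
      exact congrArg _ (sum_congr rfl fun m _ => sum_comm)
    _ = 1 := by simp [hrow, card_univ]
  exact (pow_eq_one_iff_of_nonneg (norm_nonneg _) two_ne_zero).1 hsq

section Outer

variable {α : Type*} (ψ : EuclideanSpace ℂ α)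

lemma sum_mul_star_eq_norm_sq [Fintype α] : ∑ x, ψ x * star (ψ x) = (‖ψ‖ ^ 2 : ℝ) := by
  simp [EuclideanSpace.norm_sq_eq, Complex.mul_conj, Complex.normSq_eq_norm_sq]

lemma outer_isHermitian : (outer ψ).IsHermitian := by
  ext x y
  simp [outer, mul_comm]

lemma outer_mul_self [Fintype α] : outer ψ * outer ψ = ((‖ψ‖ ^ 2 : ℝ) : ℂ) • outer ψ := by
  ext x y
  simp only [Matrix.mul_apply, outer, Matrix.of_apply, Matrix.smul_apply, smul_eq_mul,
    ← sum_mul_star_eq_norm_sq, sum_mul]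
  exact sum_congr rfl fun z _ => by ring

lemma trace_outer [Fintype α] : (outer ψ).trace = ((‖ψ‖ ^ 2 : ℝ) : ℂ) := by
  simp only [Matrix.trace, Matrix.diag, outer, Matrix.of_apply]
  exact sum_mul_star_eq_norm_sq ψ

end Outer

section CQState

variable {F G : Type*} [DecidableEq F] (p : F → ℝ) (ρ : F → Matrix G G ℂ)

lemma cqState_isHermitian (hρ : ∀ a, (ρ a).IsHermitian) : (cqState p ρ).IsHermitian := by
  ext ⟨a, u⟩ ⟨b, v⟩
  by_cases hab : a = b
  · subst hab
    simp [cqState, ← (hρ a).apply u v]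
  · simp [cqState, hab, Ne.symm hab]

lemma cqState_mul_cqState [Fintype F] [Fintype G] (q : F → ℝ) (σ : F → Matrix G G ℂ) :
    cqState p ρ * cqState q σ = cqState (p * q) (fun a => ρ a * σ a) := by
  ext ⟨a, u⟩ ⟨b, v⟩
  simp only [Matrix.mul_apply, Fintype.sum_prod_type, cqState, Matrix.of_apply, ite_mul, zero_mul,
    mul_ite, mul_zero]
  by_cases hab : a = b
  · subst hab
    rw [Fintype.sum_eq_single a fun e he => sum_eq_zero fun w _ => if_neg he]
    simp only [if_true, Pi.mul_apply, Complex.ofReal_mul, mul_sum]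
    exact sum_congr rfl fun w _ => by ring
  · simp [hab]

lemma trace_cqState [Fintype F] [Fintype G] :
    (cqState p ρ).trace = ∑ a, (p a : ℂ) * (ρ a).trace := by
  simp [Matrix.trace, Fintype.sum_prod_type, cqState, mul_sum]

lemma ptraceSnd_cqState [Fintype G] :
    ptraceSnd (cqState p ρ) = Matrix.diagonal fun a => (p a : ℂ) * (ρ a).trace := by
  ext a b
  by_cases hab : a = b
  · subst hab
    simp [ptraceSnd, cqState, Matrix.trace, mul_sum]
  · simp [ptraceSnd, cqState, hab]

lemma ptraceFst_cqState [Fintype F] : ptraceFst (cqState p ρ) = ∑ a, (p a : ℂ) • ρ a := by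
  ext u v
  simp [ptraceFst, cqState, Matrix.sum_apply]

end CQState

lemma cqState_const_mul_self {F G : Type*} [Fintype F] [Fintype G] [DecidableEq F] (c : ℝ)
    {ρ : F → Matrix G G ℂ} (hρ : ∀ a, ρ a * ρ a = ρ a) :
    cqState (fun _ => c) ρ * cqState (fun _ => c) ρ = (c : ℂ) • cqState (fun _ => c) ρ := by
  rw [cqState_mul_cqState]
  ext x y
  simp only [cqState, hρ, Matrix.of_apply, Matrix.smul_apply, smul_eq_mul, Pi.mul_apply,
    Complex.ofReal_mul, mul_ite, mul_zero, mul_assoc]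

open Matrix in
lemma _root_.Matrix.IsHermitian.eigenvalues_eq_zero_or_eq_of_mul_self_eq_smul {𝕜 n : Type*}
    [RCLike 𝕜] [Fintype n] [DecidableEq n] {ρ : Matrix n n 𝕜} (hρ : ρ.IsHermitian) {c : ℝ}
    (hsq : ρ * ρ = (c : 𝕜) • ρ) (i : n) : hρ.eigenvalues i = 0 ∨ hρ.eigenvalues i = c := by
  set v := ⇑(hρ.eigenvectorBasis i)
  set t := hρ.eigenvalues i
  have hv : ρ *ᵥ v = (t : 𝕜) • v := by
    rw [hρ.mulVec_eigenvectorBasis, RCLike.real_smul_eq_coe_smul (K := 𝕜)]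
  have hv0 : v ≠ 0 := (WithLp.ofLp_eq_zero 2).ne.2 (hρ.eigenvectorBasis.orthonormal.ne_zero i)
  have hquad : ((t * (t - c) : ℝ) : 𝕜) • v = 0 := by
    have h := congrArg (· *ᵥ v) hsq
    simp only [← Matrix.mulVec_mulVec, Matrix.smul_mulVec, hv, Matrix.mulVec_smul, smul_smul] at h
    push_cast
    rw [mul_sub, sub_smul, h, mul_comm, sub_self]
  rcases smul_eq_zero.1 hquad with h | h
  · rcases mul_eq_zero.1 (RCLike.ofReal_eq_zero.1 h) with h | h
    · exact Or.inl h
    · exact Or.inr (sub_eq_zero.1 h)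
  · exact absurd h hv0

lemma ent2_of_eq_zero_or_eq {x c : ℝ} (hx : x = 0 ∨ x = c) : ent2 x = -Real.logb 2 c * x := by
  rcases hx with rfl | rfl <;> simp [ent2]; ring

lemma vN_eq_neg_logb_of_mul_self_eq_smul {n : Type*} [Fintype n] [DecidableEq n]
    {ρ : Matrix n n ℂ} (hρ : ρ.IsHermitian) {c : ℝ} (hsq : ρ * ρ = (c : ℂ) • ρ)
    (htr : ρ.trace = 1) : vN ρ = -Real.logb 2 c := by
  have hsum : ∑ i, hρ.eigenvalues i = 1 := by
    have h := hρ.trace_eq_sum_eigenvalues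
    rw [htr, ← RCLike.ofReal_sum, ← RCLike.ofReal_one] at h
    exact RCLike.ofReal_injective h.symm
  rw [vN, dif_pos hρ]
  simp only [ent2_of_eq_zero_or_eq (hρ.eigenvalues_eq_zero_or_eq_of_mul_self_eq_smul hsq _),
    ← mul_sum, hsum, mul_one]

theorem theta_tilde_entropies_general {N M : ℕ}
    (E : Bits N → Bits N → EuclideanSpace ℂ (Fin M)) (hE : Attack E)
    (Θ : Matrix (Bits N × ((Bits N × Fin M) × Bits N)) (Bits N × ((Bits N × Fin M) × Bits N)) ℂ)
    (hΘ : Θ = cqState (fun _ : Bits N => (2 ^ N : ℝ)⁻¹) (fun i => outer (phi E i))) :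
    (∀ i : Bits N, ‖phi E i‖ = 1)
    ∧ vN (ptraceSnd Θ) = N
    ∧ vN Θ = N
    ∧ vN (ptraceSnd Θ) + vN (ptraceFst Θ) - vN Θ
      = vN ((2 ^ N : ℂ)⁻¹ • ∑ i : Bits N, outer (phi E i)) := by
  have hunit := norm_phi hE
  have hproj : ∀ i, outer (phi E i) * outer (phi E i) = outer (phi E i) := fun i => by
    simp [outer_mul_self, hunit]
  have htr : ∀ i, (outer (phi E i)).trace = 1 := fun i => by simp [trace_outer, hunit]
  have hlog : -Real.logb 2 (2 ^ N : ℝ)⁻¹ = N := by simp [Real.logb_inv, Real.logb_pow]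
  have hRN : vN (ptraceSnd Θ) = N := by
    rw [hΘ, ptraceSnd_cqState, ← hlog]
    simp only [htr, mul_one]
    refine vN_eq_neg_logb_of_mul_self_eq_smul ?_ ?_ ?_
    · exact Matrix.isHermitian_diagonal_of_self_adjoint _ (by ext; simp)
    · ext a b; by_cases hab : a = b <;> simp [hab]
    · simp [Matrix.trace_diagonal]
  have hΘN : vN Θ = N := by
    rw [hΘ, ← hlog]
    refine vN_eq_neg_logb_of_mul_self_eq_smul (cqState_isHermitian _ _ fun i => outer_isHermitian _)
      (cqState_const_mul_self _ hproj) ?_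
    simp [trace_cqState, htr]
  refine ⟨hunit, hRN, hΘN, ?_⟩
  rw [hRN, hΘN, add_sub_cancel_left, hΘ, ptraceFst_cqState, ← smul_sum]
  push_cast
  rfl

/-- Entropy computation for the extended classical–quantum state `Θ̃`. -/
theorem theta_tilde_entropies {N M : ℕ} (hN : 1 ≤ N)
    (E : Bits N → Bits N → EuclideanSpace ℂ (Fin M)) (hE : Attack E)
    (Θ : Matrix (Bits N × ((Bits N × Fin M) × Bits N)) (Bits N × ((Bits N × Fin M) × Bits N)) ℂ)
    (hΘ : Θ = cqState (fun _ : Bits N => (2 ^ N : ℝ)⁻¹) (fun i => outer (phi E i))) :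
    (∀ i : Bits N, ‖phi E i‖ = 1)
    ∧ vN (ptraceSnd Θ) = N
    ∧ vN Θ = N
    ∧ vN (ptraceSnd Θ) + vN (ptraceFst Θ) - vN Θ
      = vN ((2 ^ N : ℂ)⁻¹ • ∑ i : Bits N, outer (phi E i)) :=
  theta_tilde_entropies_general E hE Θ hΘ

end IDT
end

section
/- The Fourier coefficients of the Gram function are Bob's conjugate-basis error probabilities: for every attack E and every l ∈ I, 2^{-N} ∑_{t ∈ I} f(t) (-1)^{t·l} = p̄(l), where f(t) := 2^{-N} ∑_{n,v ∈ I} ⟨E v (v⊕n), E (t⊕v) ((t⊕v)⊕n)⟩. -/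
open scoped ComplexInnerProductSpace ComplexOrder
open Finset

namespace IDT

/-- The Gram function `f(t)` of the purification vectors. -/
noncomputable def gramF {N M : ℕ} (E : Bits N → Bits N → EuclideanSpace ℂ (Fin M))
    (t : Bits N) : ℂ :=
  (2 ^ N : ℂ)⁻¹ * ∑ n : Bits N, ∑ v : Bits N, ⟪E v (v + n), E (t + v) ((t + v) + n)⟫

variable {N : ℕ}

lemma add_self (x : Bits N) : x + x = 0 := by
  funext n; exact CharTwo.add_self_eq_zero _

lemma add_cancel_left (v j : Bits N) : v + (v + j) = j := by
  rw [← add_assoc, add_self, zero_add]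

lemma neg_one_pow_mod (m : ℕ) : (-1 : ℂ) ^ m = (-1) ^ (m % 2) := by
  conv_lhs => rw [← Nat.div_add_mod m 2]
  rw [pow_add, pow_mul]; norm_num

lemma bdot_comm (x y : Bits N) : bdot x y = bdot y x := by
  simp [bdot, mul_comm]

lemma bdot_zero_right (x : Bits N) : bdot x 0 = 0 := by simp [bdot]

lemma chi_add_right (x y z : Bits N) :
    (-1 : ℂ) ^ bdot x (y + z) = (-1) ^ bdot x y * (-1) ^ bdot x z := by
  rw [← pow_add, neg_one_pow_mod, neg_one_pow_mod (bdot x y + bdot x z)]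
  congr 1
  unfold bdot
  rw [← Finset.sum_add_distrib, Finset.sum_nat_mod]
  conv_rhs => rw [Finset.sum_nat_mod]
  congr 1
  refine Finset.sum_congr rfl fun n _ => ?_
  rw [Pi.add_apply, ZMod.val_add, ← mul_add, Nat.mul_mod, Nat.mod_mod_of_dvd _ (dvd_refl 2), ← Nat.mul_mod]

lemma chi_add_left (x y z : Bits N) :
    (-1 : ℂ) ^ bdot (x + y) z = (-1) ^ bdot x z * (-1) ^ bdot y z := by
  rw [bdot_comm, chi_add_right, bdot_comm z x, bdot_comm z y]

lemma chi_mul_self (x y : Bits N) :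
    (-1 : ℂ) ^ bdot x y * (-1) ^ bdot x y = 1 := by
  rw [← pow_add, ← two_mul, pow_mul]; norm_num

lemma sum_chi (s : Bits N) :
    ∑ i : Bits N, (-1 : ℂ) ^ bdot i s = if s = 0 then (2 ^ N : ℂ) else 0 := by
  split_ifs with h
  · subst h
    simp [bdot_zero_right, Finset.card_univ]
  · obtain ⟨n₀, hn₀⟩ := Function.ne_iff.mp h
    have hs : s n₀ = 1 := by
      simp only [Pi.zero_apply] at hn₀
      have : ∀ a : ZMod 2, a ≠ 0 → a = 1 := by decide
      exact this _ hn₀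
    set e : Bits N := Pi.single n₀ 1 with he
    have hes : bdot e s = 1 := by
      rw [bdot, Finset.sum_eq_single n₀]
      · rw [he, Pi.single_eq_same, hs]; decide
      · intro b _ hb; simp [he, Pi.single_eq_of_ne hb]
      · simp
    have key : ∀ i : Bits N, (-1 : ℂ) ^ bdot (i + e) s = -((-1) ^ bdot i s) := by
      intro i
      rw [chi_add_left, hes]; ring
    have h2 : ∑ i : Bits N, (-1 : ℂ) ^ bdot ((Equiv.addRight e) i) s
        = ∑ i : Bits N, (-1 : ℂ) ^ bdot i s :=
      Equiv.sum_comp (Equiv.addRight e) (fun i => (-1 : ℂ) ^ bdot i s)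
    simp only [Equiv.coe_addRight, key, Finset.sum_neg_distrib] at h2
    linear_combination (-(1 : ℂ) / 2) * h2

variable {M : ℕ} (E : Bits N → Bits N → EuclideanSpace ℂ (Fin M))

lemma gram_reindex (t : Bits N) :
    gramF E t = (2 ^ N : ℂ)⁻¹ * ∑ a : Bits N, ∑ j : Bits N, ⟪E a j, E (a + t) (j + t)⟫ := by
  unfold gramF
  congr 1
  rw [Finset.sum_comm]
  refine Finset.sum_congr rfl fun v _ => ?_
  refine Fintype.sum_equiv (Equiv.addLeft v) _ _ fun j => ?_
  simp only [Equiv.coe_addLeft]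
  have h : E (t + v) (t + v + j) = E (v + t) (v + j + t) := by
    rw [add_comm t v]
    abel_nf
  rw [h]

lemma pbar_cast (l : Bits N) :
    (pbar E l : ℂ) = (2 ^ N : ℂ)⁻¹ *
      ∑ i : Bits N, ⟪Ebar E i (i + l), Ebar E i (i + l)⟫ := by
  unfold pbar
  push_cast
  congr 1
  refine Finset.sum_congr rfl fun i _ => ?_
  rw [inner_self_eq_norm_sq_to_K]
  norm_cast

lemma inner_Ebar (i l : Bits N) :
    ⟪Ebar E i (i + l), Ebar E i (i + l)⟫
      = (2 ^ N : ℂ)⁻¹ * ((2 ^ N : ℂ)⁻¹ *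
        ∑ a : Bits N, ∑ j : Bits N, ∑ b : Bits N, ∑ k : Bits N,
          ((-1 : ℂ) ^ (bdot (i + l) j + bdot a i) * (-1 : ℂ) ^ (bdot (i + l) k + bdot b i)) *
            ⟪E b k, E a j⟫) := by
  simp only [Ebar, inner_smul_left, inner_smul_right, sum_inner, inner_sum, map_inv₀, map_pow,
    map_neg, map_one, Complex.conj_ofNat, Finset.mul_sum]
  refine Finset.sum_congr rfl fun a _ => ?_
  refine Finset.sum_congr rfl fun j _ => ?_
  refine Finset.sum_congr rfl fun b _ => ?_
  refine Finset.sum_congr rfl fun k _ => ?_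
  ring

lemma add_eq_zero_iff' (x y : Bits N) : x + y = 0 ↔ x = y := by
  constructor
  · intro h
    have h2 := congrArg (· + y) h
    simp only [add_assoc, add_self, add_zero, zero_add] at h2
    exact h2
  · intro h; rw [h, add_self]

lemma add_cancel_right (x t : Bits N) : (x + t) + t = x := by
  rw [add_assoc, add_self, add_zero]

lemma main_sum (l : Bits N) :
    (∑ i : Bits N, ∑ a : Bits N, ∑ j : Bits N, ∑ b : Bits N, ∑ k : Bits N,
      ((-1 : ℂ) ^ (bdot (i + l) j + bdot a i) * (-1 : ℂ) ^ (bdot (i + l) k + bdot b i)) *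
        ⟪E b k, E a j⟫)
    = (2 ^ N : ℂ) * ∑ t : Bits N, (-1 : ℂ) ^ bdot l t *
        ∑ a : Bits N, ∑ j : Bits N, ⟪E a j, E (a + t) (j + t)⟫ := by
  classical
  have hswap : ∀ (g : Bits N → Bits N → Bits N → Bits N → Bits N → ℂ),
      (∑ i : Bits N, ∑ a : Bits N, ∑ j : Bits N, ∑ b : Bits N, ∑ k : Bits N, g i a j b k)
      = ∑ a : Bits N, ∑ j : Bits N, ∑ b : Bits N, ∑ k : Bits N, ∑ i : Bits N, g i a j b k := by
    intro g
    rw [Finset.sum_comm]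
    refine Finset.sum_congr rfl fun a _ => ?_
    rw [Finset.sum_comm]
    refine Finset.sum_congr rfl fun j _ => ?_
    rw [Finset.sum_comm]
    refine Finset.sum_congr rfl fun b _ => ?_
    rw [Finset.sum_comm]
  rw [hswap]
  -- step 1: do the i-sum
  have step1 : ∀ a j b k : Bits N,
      (∑ i : Bits N, ((-1 : ℂ) ^ (bdot (i + l) j + bdot a i) *
          (-1 : ℂ) ^ (bdot (i + l) k + bdot b i)) * ⟪E b k, E a j⟫)
      = ((-1 : ℂ) ^ bdot l j * (-1 : ℂ) ^ bdot l k * ⟪E b k, E a j⟫) *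
          (if j + (a + (k + b)) = 0 then (2 ^ N : ℂ) else 0) := by
    intro a j b k
    have hterm : ∀ i : Bits N,
        ((-1 : ℂ) ^ (bdot (i + l) j + bdot a i) * (-1 : ℂ) ^ (bdot (i + l) k + bdot b i)) *
            ⟪E b k, E a j⟫
        = ((-1 : ℂ) ^ bdot l j * (-1 : ℂ) ^ bdot l k * ⟪E b k, E a j⟫) *
            (-1 : ℂ) ^ bdot i (j + (a + (k + b))) := by
      intro i
      rw [pow_add, pow_add, chi_add_left i l j, chi_add_left i l k, bdot_comm a i, bdot_comm b i,
        chi_add_right i j (a + (k + b)), chi_add_right i a (k + b), chi_add_right i k b]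
      ring
    rw [Finset.sum_congr rfl fun i _ => hterm i, ← Finset.mul_sum, sum_chi]
  rw [Finset.sum_congr rfl fun a _ => Finset.sum_congr rfl fun j _ =>
    Finset.sum_congr rfl fun b _ => Finset.sum_congr rfl fun k _ => step1 a j b k]
  -- step 2: eliminate k via the delta
  have step2 : ∀ a j b : Bits N,
      (∑ k : Bits N, ((-1 : ℂ) ^ bdot l j * (-1 : ℂ) ^ bdot l k * ⟪E b k, E a j⟫) *
          (if j + (a + (k + b)) = 0 then (2 ^ N : ℂ) else 0))
      = ((-1 : ℂ) ^ bdot l j * (-1 : ℂ) ^ bdot l (j + (a + b)) *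
          ⟪E b (j + (a + b)), E a j⟫) * (2 ^ N : ℂ) := by
    intro a j b
    have hcond : ∀ k : Bits N, (j + (a + (k + b)) = 0) ↔ (k = j + (a + b)) := by
      intro k
      rw [show j + (a + (k + b)) = k + (j + (a + b)) by abel, add_eq_zero_iff']
    rw [Finset.sum_congr rfl fun k _ => by rw [if_congr (hcond k) rfl rfl]]
    simp [mul_ite, mul_zero, Finset.sum_ite_eq']
  rw [Finset.sum_congr rfl fun a _ => Finset.sum_congr rfl fun j _ =>
    Finset.sum_congr rfl fun b _ => step2 a j b]
  -- step 3: reindex b ↦ a + t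
  have step3 : ∀ a j : Bits N,
      (∑ t : Bits N, ((-1 : ℂ) ^ bdot l t * ⟪E (a + t) (j + t), E a j⟫) * (2 ^ N : ℂ))
      = ∑ b : Bits N, ((-1 : ℂ) ^ bdot l j * (-1 : ℂ) ^ bdot l (j + (a + b)) *
          ⟪E b (j + (a + b)), E a j⟫) * (2 ^ N : ℂ) := by
    intro a j
    refine Fintype.sum_equiv (Equiv.addLeft a) _ _ fun t => ?_
    simp only [Equiv.coe_addLeft]
    rw [add_cancel_left a t, chi_add_right l j t]
    have h1 := chi_mul_self l j
    linear_combination (-((-1 : ℂ) ^ bdot l t * ⟪E (a + t) (j + t), E a j⟫ * (2 ^ N : ℂ))) * h1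
  rw [Finset.sum_congr rfl fun a _ => Finset.sum_congr rfl fun j _ => (step3 a j).symm]
  -- reorder sums: t outermost
  rw [Finset.sum_congr rfl fun a (_ : a ∈ Finset.univ) =>
    Finset.sum_comm (s := Finset.univ) (t := Finset.univ), Finset.sum_comm]
  -- step 4: symmetrize the inner double sum
  have step4 : ∀ t : Bits N,
      (∑ a : Bits N, ∑ j : Bits N, ⟪E (a + t) (j + t), E a j⟫)
      = ∑ a : Bits N, ∑ j : Bits N, ⟪E a j, E (a + t) (j + t)⟫ := by
    intro t
    refine Fintype.sum_equiv (Equiv.addRight t) _ _ fun a => ?_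
    simp only [Equiv.coe_addRight]
    rw [add_cancel_right]
    refine Fintype.sum_equiv (Equiv.addRight t) _ _ fun j => ?_
    simp only [Equiv.coe_addRight]
    rw [add_cancel_right]
  conv_rhs => rw [Finset.mul_sum]
  refine Finset.sum_congr rfl fun t _ => ?_
  rw [← step4 t]
  simp only [Finset.mul_sum]
  refine Finset.sum_congr rfl fun a _ => Finset.sum_congr rfl fun j _ => ?_
  ring

/-- The Fourier coefficients of the Gram function are Bob's conjugate-basis error
probabilities. -/
theorem fourier_coeff_eq_pbar {N M : ℕ} (hN : 1 ≤ N)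
    (E : Bits N → Bits N → EuclideanSpace ℂ (Fin M)) (hE : Attack E) (l : Bits N) :
    (2 ^ N : ℂ)⁻¹ * ∑ t : Bits N, gramF E t * (-1 : ℂ) ^ bdot t l = (pbar E l : ℂ) := by

  have h2N : (2 ^ N : ℂ) ≠ 0 := pow_ne_zero _ two_ne_zero
  have hL : (2 ^ N : ℂ)⁻¹ * ∑ t : Bits N, gramF E t * (-1 : ℂ) ^ bdot t l
      = (2 ^ N : ℂ)⁻¹ * ((2 ^ N : ℂ)⁻¹ * ∑ t : Bits N, (-1 : ℂ) ^ bdot l t *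
          ∑ a : Bits N, ∑ j : Bits N, ⟪E a j, E (a + t) (j + t)⟫) := by
    rw [Finset.sum_congr rfl fun t (_ : t ∈ Finset.univ) =>
      show gramF E t * (-1 : ℂ) ^ bdot t l = (2 ^ N : ℂ)⁻¹ * ((-1 : ℂ) ^ bdot l t *
          ∑ a : Bits N, ∑ j : Bits N, ⟪E a j, E (a + t) (j + t)⟫) from by
        rw [gram_reindex E t, bdot_comm t l]; ring]
    rw [← Finset.mul_sum]
  rw [hL, pbar_cast E l]
  rw [Finset.sum_congr rfl fun i (_ : i ∈ Finset.univ) => inner_Ebar E i l]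
  rw [← Finset.mul_sum, ← Finset.mul_sum, main_sum E l]
  field_simp


end IDT
end

section
/- Phase-flip example separating the two information–disturbance bounds: let 𝟙 ∈ I be the all-ones string, e₀ a fixed unit vector of ℂ^M, and define E i j := (if i = j then (-1)^{i·𝟙} else 0) • e₀. Then E is an attack (satisfies the unitarity condition); its conjugate-basis error distribution is deterministic, p̄(c) = if c = 𝟙 then 1 else 0, so that H(A⊕B|b̄) = 0 while the error probability δ := ∑_{c ≠ 0} p̄(c) equals 1; and for every POVM X on ℂ^M, Eve's information gain vanishes: I(A:E[X]|b) = 0. -/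
open scoped ComplexInnerProductSpace ComplexOrder
open Finset

namespace IDT

/-!
Eve's attack `E i j = δ_ij (-1)^{i·u} v` leaves the string untouched and only imprints a phase on
a fixed vector, so her apparatus ends up in the state `v` whatever Alice sent: her outcome
distribution does not depend on `i`, the joint distribution of `(i, α)` is a product and the
mutual information vanishes. In the conjugate basis the phase `(-1)^{i·u}` is a character of `i`,
and orthogonality of the characters of `(ℤ/2)^N` concentrates `Ē l s` on `s = l ⊕ u`; Bob's
conjugate-basis error is therefore always `u = 𝟙`.
-/

section Characters

variable {N : ℕ}

lemma neg_one_pow_eq_of_cast_eq {m n : ℕ} (h : (m : ZMod 2) = n) :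
    (-1 : ℂ) ^ m = (-1) ^ n := by
  rw [neg_one_pow_eq_pow_mod_two m, neg_one_pow_eq_pow_mod_two n,
    (ZMod.natCast_eq_natCast_iff' m n 2).1 h]

lemma cast_bdot (s i : Bits N) : (bdot s i : ZMod 2) = s ⬝ᵥ i := by
  simp [bdot, dotProduct]

lemma sum_neg_one_pow_bdot (t : Bits N) :
    ∑ i : Bits N, (-1 : ℂ) ^ bdot t i = if t = 0 then 2 ^ N else 0 := by
  split_ifs with ht
  · simp [ht, bdot]
  obtain ⟨n, hn⟩ : ∃ n, t n ≠ 0 := Function.ne_iff.1 ht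
  have hone : t n = 1 := by
    revert hn; generalize t n = b; revert b; decide
  -- Translating by `e_n` flips the sign of every term, since `t · e_n = t n = 1`.
  have hflip : ∀ i, (-1 : ℂ) ^ bdot t (i + Pi.single n 1) = -(-1) ^ bdot t i := by
    intro i
    rw [neg_one_pow_eq_of_cast_eq (n := bdot t i + 1) (by push_cast [cast_bdot]; simp [hone]),
      pow_succ, mul_neg_one]
  have h := Equiv.sum_comp (Equiv.addRight (Pi.single n 1 : Bits N)) fun i => (-1 : ℂ) ^ bdot t i
  simp only [Equiv.coe_addRight, hflip, Finset.sum_neg_distrib] at h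
  exact neg_eq_self.1 h

end Characters

@[simp] lemma ent2_zero : ent2 0 = 0 := by simp [ent2]

@[simp] lemma ent2_one : ent2 1 = 0 := by simp [ent2]

lemma ent2_mul (x y : ℝ) : ent2 (x * y) = y * ent2 x + x * ent2 y := by
  rcases eq_or_ne x 0 with rfl | hx
  · simp
  rcases eq_or_ne y 0 with rfl | hy
  · simp
  simp only [ent2, Real.logb_mul hx hy]
  ring

lemma mutualInfo_mul_eq_zero {S T : Type*} [Fintype S] [Fintype T] {p : S → ℝ} {q : T → ℝ}
    (hp : ∑ s, p s = 1) (hq : ∑ t, q t = 1) : mutualInfo (fun s t => p s * q t) = 0 := by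
  simp only [mutualInfo, ← Finset.mul_sum, ← Finset.sum_mul, hp, hq, mul_one, one_mul, ent2_mul,
    Finset.sum_add_distrib]
  ring

section Attack

variable {N M : ℕ} {E : Bits N → Bits N → EuclideanSpace ℂ (Fin M)}

lemma Attack.sum_pOut (hE : Attack E) {A : Type*} [Fintype A] (P : POVM A M) (i : Bits N) :
    ∑ a, pOut E P a i = 1 := by
  have hsum : ∀ x, ∑ a, Matrix.toEuclideanLin (P.X a) x = x := fun x => by
    simp [← LinearMap.sum_apply, ← map_sum, P.sum_one]
  simp only [pOut, ← Complex.re_sum]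
  rw [Finset.sum_comm]
  simp only [← inner_sum, hsum, hE i i, if_pos, Complex.one_re]

lemma infoGain_eq_zero_of_pOut_eq (hE : Attack E) {A : Type*} [Fintype A] (P : POVM A M)
    (h : ∀ a i, pOut E P a i = pOut E P a 0) : infoGain E P = 0 := by
  have huniform : ∑ _i : Bits N, (2 ^ N : ℝ)⁻¹ = 1 := by simp
  unfold infoGain
  simp only [h]
  exact mutualInfo_mul_eq_zero huniform (hE.sum_pOut P 0)

end Attack

section Diagonal

variable {N M : ℕ}

def diagAttack (c : Bits N → ℂ) (v : EuclideanSpace ℂ (Fin M)) :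
    Bits N → Bits N → EuclideanSpace ℂ (Fin M) :=
  fun i j => (if i = j then c i else 0) • v

variable {c : Bits N → ℂ} {v : EuclideanSpace ℂ (Fin M)}

lemma attack_diagAttack (hc : ∀ i, ‖c i‖ = 1) (hv : ‖v‖ = 1) : Attack (diagAttack c v) := by
  intro i k
  split_ifs with hik
  · subst hik
    rw [Finset.sum_eq_single i (fun j _ hj => by simp [diagAttack, Ne.symm hj]) (by simp)]
    simp [diagAttack, inner_self_eq_norm_sq_to_K, norm_smul, hc, hv]
  · refine Finset.sum_eq_zero fun j _ => ?_
    by_cases hij : i = j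
    · subst hij; simp [diagAttack, Ne.symm hik]
    · simp [diagAttack, hij]

lemma Ebar_diagAttack (l s : Bits N) :
    Ebar (diagAttack c v) l s = ((2 ^ N : ℂ)⁻¹ * ∑ i, (-1) ^ (bdot s i + bdot i l) * c i) • v := by
  have hrow : ∀ i, ∑ j, (-1 : ℂ) ^ (bdot s j + bdot i l) • diagAttack c v i j
      = ((-1) ^ (bdot s i + bdot i l) * c i) • v := fun i => by
    rw [Finset.sum_eq_single i (fun j _ hj => by simp [diagAttack, Ne.symm hj]) (by simp)]
    simp [diagAttack, smul_smul]
  simp only [Ebar, hrow, ← Finset.sum_smul, smul_smul]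

lemma pOut_diagAttack (hc : ∀ i, ‖c i‖ = 1) {A : Type*} [Fintype A] (P : POVM A M) (a : A)
    (i : Bits N) : pOut (diagAttack c v) P a i = (⟪v, Matrix.toEuclideanLin (P.X a) v⟫).re := by
  rw [pOut, Finset.sum_eq_single i (fun j _ hj => by simp [diagAttack, Ne.symm hj]) (by simp)]
  simp only [diagAttack, if_pos, map_smul, inner_smul_left, inner_smul_right, ← mul_assoc,
    Complex.mul_conj', hc]
  simp

end Diagonal

section PhaseFlip

variable {N M : ℕ} {v : EuclideanSpace ℂ (Fin M)}

lemma Ebar_phaseFlip (u l s : Bits N) :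
    Ebar (diagAttack (fun i => (-1 : ℂ) ^ bdot i u) v) l s
      = (if s + l + u = 0 then 1 else 0) • v := by
  have hterm : ∀ i, (-1 : ℂ) ^ (bdot s i + bdot i l) * (-1) ^ bdot i u
      = (-1) ^ bdot (s + l + u) i := fun i => by
    rw [← pow_add]
    refine neg_one_pow_eq_of_cast_eq ?_
    push_cast [cast_bdot]
    rw [add_dotProduct, add_dotProduct, dotProduct_comm i l, dotProduct_comm i u]
  simp [Ebar_diagAttack, hterm, sum_neg_one_pow_bdot]

lemma pbar_phaseFlip (hv : ‖v‖ = 1) (u c : Bits N) :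
    pbar (diagAttack (fun i => (-1 : ℂ) ^ bdot i u) v) c = if c = u then 1 else 0 := by
  have hshift : ∀ i : Bits N, i + c + i + u = 0 ↔ c = u := fun i => by
    rw [add_comm i c, add_assoc c, ZModModule.add_self, add_zero, ← ZModModule.sub_eq_add,
      sub_eq_zero]
  simp only [pbar, Ebar_phaseFlip, hshift]
  split_ifs <;> simp [hv]

end PhaseFlip

/-- Phase-flip example: deterministic conjugate-basis error (`δ = 1`) but zero entropy and zero
information gain for Eve. -/
theorem phase_flip_example {N M : ℕ} (hN : 1 ≤ N)
    (v : EuclideanSpace ℂ (Fin M)) (hv : ‖v‖ = 1)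
    (ones : Bits N) (hones : ones = fun _ => 1)
    (E : Bits N → Bits N → EuclideanSpace ℂ (Fin M))
    (hEdef : E = fun i j => (if i = j then ((-1 : ℂ) ^ bdot i ones) else 0) • v) :
    Attack E
    ∧ (∀ c : Bits N, pbar E c = if c = ones then 1 else 0)
    ∧ (∑ c : Bits N, ent2 (pbar E c)) = 0
    ∧ (∑ c ∈ Finset.univ.filter (fun c : Bits N => c ≠ 0), pbar E c) = 1
    ∧ ∀ (A : Type) [Fintype A] (P : POVM A M), infoGain E P = 0 := by
  obtain rfl : E = diagAttack (fun i => (-1 : ℂ) ^ bdot i ones) v := hEdef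
  have hphase : ∀ i : Bits N, ‖(-1 : ℂ) ^ bdot i ones‖ = 1 := by simp
  have hattack := attack_diagAttack hphase hv
  have hpbar := pbar_phaseFlip hv ones
  have hones_ne : ones ≠ 0 := fun h => one_ne_zero (congrFun (hones ▸ h) ⟨0, hN⟩)
  refine ⟨hattack, hpbar, ?_, ?_, fun A _ P => ?_⟩
  · simp [hpbar, apply_ite ent2]
  · simp [hpbar, hones_ne]
  · exact infoGain_eq_zero_of_pOut_eq hattack P fun a i => by simp only [pOut_diagAttack hphase]

end IDT
end
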